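/- Let L ⊂ ℝ^n be a full-rank lattice and L* its dual lattice. Then L is cyclic if and only if L* is cyclic, i.e. ρ(L) = L if and only if ρ(L*) = L*. -/

import Mathlib

noncomputable section

/-- A full-rank lattice in `ℝⁿ`: the `ℤ`-span of an `ℝ`-basis of `ℝⁿ`. -/
def IsFullLattice (n : ℕ) (L : Submodule ℤ (EuclideanSpace ℝ (Fin n))) : Prop :=
  ∃ b : Module.Basis (Fin n) ℝ (EuclideanSpace ℝ (Fin n)), L = Submodule.span ℤ (Set.range b)

/-- The rotation shift operator `ρ(c₁, …, c_n) = (c_n, c₁, …, c_{n-1})`. -/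
def rotShift (n : ℕ) (c : EuclideanSpace ℝ (Fin n)) : EuclideanSpace ℝ (Fin n) :=
  WithLp.toLp 2 (fun i => c ((finRotate n).symm i))

/-- The dual lattice `L* = {x : ⟨x, y⟩ ∈ ℤ for all y ∈ L}`. -/
def dualLattice (n : ℕ) (L : Submodule ℤ (EuclideanSpace ℝ (Fin n))) :
    Set (EuclideanSpace ℝ (Fin n)) :=
  {x | ∀ y ∈ L, ∃ k : ℤ, (inner ℝ x y : ℝ) = (k : ℝ)}

def rotInv (n : ℕ) (c : EuclideanSpace ℝ (Fin n)) : EuclideanSpace ℝ (Fin n) :=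
  WithLp.toLp 2 (fun i => c (finRotate n i))

lemma rot_rotInv (n : ℕ) (c : EuclideanSpace ℝ (Fin n)) : rotShift n (rotInv n c) = c := by
  ext i
  exact congrArg c.ofLp ((finRotate n).apply_symm_apply i)

lemma rotInv_rot (n : ℕ) (c : EuclideanSpace ℝ (Fin n)) : rotInv n (rotShift n c) = c := by
  ext i
  exact congrArg c.ofLp ((finRotate n).symm_apply_apply i)

lemma inner_rot (n : ℕ) (x y : EuclideanSpace ℝ (Fin n)) :
    (inner ℝ (rotShift n x) (rotShift n y) : ℝ) = inner ℝ x y := by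
  simp only [rotShift, PiLp.inner_apply, PiLp.toLp_apply, RCLike.inner_apply, starRingEnd_apply, star_trivial]
  exact Equiv.sum_comp (finRotate n).symm (fun i => y i * x i)

def dualSet (n : ℕ) (S : Set (EuclideanSpace ℝ (Fin n))) : Set (EuclideanSpace ℝ (Fin n)) :=
  {x | ∀ y ∈ S, ∃ k : ℤ, (inner ℝ x y : ℝ) = (k : ℝ)}

lemma mem_dualSet_rot (n : ℕ) (S : Set (EuclideanSpace ℝ (Fin n)))
    (h : rotShift n '' S = S) (x : EuclideanSpace ℝ (Fin n)) :
    rotShift n x ∈ dualSet n S ↔ x ∈ dualSet n S := by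
  constructor
  · intro hx y hy
    have : rotShift n y ∈ S := by rw [← h]; exact ⟨y, hy, rfl⟩
    obtain ⟨k, hk⟩ := hx _ this
    exact ⟨k, by rwa [inner_rot] at hk⟩
  · intro hx y hy
    rw [← h] at hy
    obtain ⟨z, hz, rfl⟩ := hy
    obtain ⟨k, hk⟩ := hx z hz
    exact ⟨k, by rwa [inner_rot]⟩

lemma rot_dualSet (n : ℕ) (S : Set (EuclideanSpace ℝ (Fin n)))
    (h : rotShift n '' S = S) : rotShift n '' dualSet n S = dualSet n S := by
  ext x
  constructor
  · rintro ⟨z, hz, rfl⟩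
    exact (mem_dualSet_rot n S h z).2 hz
  · intro hx
    refine ⟨rotInv n x, ?_, rot_rotInv n x⟩
    rw [← mem_dualSet_rot n S h, rot_rotInv]
    exact hx

lemma dualLattice_eq (n : ℕ) (L : Submodule ℤ (EuclideanSpace ℝ (Fin n))) :
    dualLattice n L = dualSet n (L : Set (EuclideanSpace ℝ (Fin n))) := rfl

lemma ddual (n : ℕ) (L : Submodule ℤ (EuclideanSpace ℝ (Fin n)))
    (hL : IsFullLattice n L) :
    dualSet n (dualLattice n L) = (L : Set (EuclideanSpace ℝ (Fin n))) := by
  obtain ⟨b, rfl⟩ := hL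
  ext x
  constructor
  · intro hx
    -- dual basis vectors
    set d : Fin n → EuclideanSpace ℝ (Fin n) :=
      fun i => (InnerProductSpace.toDual ℝ (EuclideanSpace ℝ (Fin n))).symm ((b.coord i).toContinuousLinearMap) with hd
    have hdi : ∀ i y, (inner ℝ (d i) y : ℝ) = b.coord i y := by
      intro i y
      simp [hd, InnerProductSpace.toDual_symm_apply]
    have hdmem : ∀ i, d i ∈ dualLattice n (Submodule.span ℤ (Set.range b)) := by
      intro i y hy
      induction hy using Submodule.span_induction with
      | mem z hz =>
        obtain ⟨j, rfl⟩ := hz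
        by_cases hij : i = j
        · exact ⟨1, by rw [hdi]; simp [Module.Basis.coord_apply, hij]⟩
        · exact ⟨0, by
            rw [hdi]
            simp [Module.Basis.coord_apply, Finsupp.single_apply, Ne.symm hij]⟩
      | zero => exact ⟨0, by simp⟩
      | add a c _ _ ha hc =>
        obtain ⟨k1, h1⟩ := ha; obtain ⟨k2, h2⟩ := hc
        exact ⟨k1 + k2, by rw [inner_add_right, h1, h2]; push_cast; ring⟩
      | smul m a _ ha =>
        obtain ⟨k, h1⟩ := ha
        refine ⟨m * k, ?_⟩
        have : (inner ℝ (d i) (m • a) : ℝ) = m • (inner ℝ (d i) a : ℝ) := by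
          rw [← inner_smul_right_eq_smul]
        rw [this, h1, zsmul_eq_mul]; push_cast; ring
    choose k hk using fun i => hx (d i) (hdmem i)
    have hrepr : ∀ i, b.repr x i = (k i : ℝ) := by
      intro i
      have := hk i
      rw [real_inner_comm, hdi] at this
      simpa [Module.Basis.coord_apply] using this
    have : x = ∑ i, (k i : ℤ) • b i := by
      conv_lhs => rw [← b.sum_repr x]
      refine Finset.sum_congr rfl fun i _ => ?_
      rw [hrepr i, ← Int.cast_smul_eq_zsmul ℝ]
    rw [this]
    exact Submodule.sum_mem _ fun i _ => Submodule.smul_mem _ _ (Submodule.subset_span ⟨i, rfl⟩)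
  · intro hx u hu
    obtain ⟨k, hk⟩ := hu x hx
    exact ⟨k, by rwa [real_inner_comm]⟩

/-- A full-rank lattice is cyclic if and only if its dual lattice is cyclic. -/
theorem cyclic_iff_dual_cyclic (n : ℕ) (L : Submodule ℤ (EuclideanSpace ℝ (Fin n)))
    (hL : IsFullLattice n L) :
    rotShift n '' (L : Set (EuclideanSpace ℝ (Fin n))) = (L : Set (EuclideanSpace ℝ (Fin n))) ↔
      rotShift n '' dualLattice n L = dualLattice n L := by
  constructor
  · intro h
    rw [dualLattice_eq]
    exact rot_dualSet n _ h
  · intro h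
    have := rot_dualSet n (dualLattice n L) h
    rwa [ddual n L hL] at this
end
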